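/- Local boundedness implies a quadratic bound: if for every execution ρ of an abstract machine from an initial state, every m-free sub-execution σ (a sub-execution with no multiplicative transitions) satisfies |σ|_e ≤ |ρ'|_m where ρ' is the prefix of ρ up to the start of σ, then for every execution ρ the total number of exponential transitions satisfies |ρ|_e = O(|ρ|_m^2). -/

import Mathlib

/-- An abstract transition system whose transitions are labeled as
    multiplicative (m), exponential (e), or commutative (c). -/
structure LabeledTS (S : Type*) where
  M : S → S → Prop
  E : S → S → Prop
  C : S → S → Prop
  Init : S → Prop

namespace LabeledTS

variable {S : Type*} (T : LabeledTS S)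

/-- `Run T s s' a b`: an execution from `s` to `s'` with exactly `a`
    multiplicative and `b` exponential transitions. -/
inductive Run : S → S → ℕ → ℕ → Prop
  | refl (s : S) : Run s s 0 0
  | m {s₁ s₂ s₃ : S} {a b : ℕ} : T.M s₁ s₂ → Run s₂ s₃ a b → Run s₁ s₃ (a + 1) b
  | e {s₁ s₂ s₃ : S} {a b : ℕ} : T.E s₁ s₂ → Run s₂ s₃ a b → Run s₁ s₃ a (b + 1)
  | c {s₁ s₂ s₃ : S} {a b : ℕ} : T.C s₁ s₂ → Run s₂ s₃ a b → Run s₁ s₃ a b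

/-- Local boundedness: along any execution from an initial state, every
    m-free sub-execution has at most as many e-transitions as the number of
    m-transitions in the prefix preceding it. -/
def LocallyBounded : Prop :=
  ∀ s₀ s₁ s₂ : S, ∀ a b b' : ℕ, T.Init s₀ →
    T.Run s₀ s₁ a b → T.Run s₁ s₂ 0 b' → b' ≤ a

end LabeledTS

/-!
Cut a run at its multiplicative steps. Local boundedness bounds the exponential steps of the
m-free segment following the `i`-th multiplicative step by the `a + i` multiplicative steps
before it, where `a` counts those of the prefix in front of the run; summing over the `a' + 1`
segments of a run with `a'` multiplicative steps gives at most `(a + a') * (a' + 1)`.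
-/

namespace LabeledTS

variable {S : Type*} {T : LabeledTS S}

theorem Run.of_eq {s s' : S} {a b a' b' : ℕ} (h : T.Run s s' a b) (ha : a = a') (hb : b = b') :
    T.Run s s' a' b' :=
  ha ▸ hb ▸ h

theorem Run.append {s₁ s₂ s₃ : S} {a b a' b' : ℕ} (h : T.Run s₁ s₂ a b)
    (h' : T.Run s₂ s₃ a' b') : T.Run s₁ s₃ (a + a') (b + b') := by
  induction h with
  | refl => exact h'.of_eq (by omega) (by omega)
  | m hm _ ih => exact (Run.m hm (ih h')).of_eq (by omega) rfl
  | e he _ ih => exact (Run.e he (ih h')).of_eq rfl (by omega)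
  | c hc _ ih => exact Run.c hc (ih h')

theorem Run.exists_split_first_m {s₁ s₂ : S} {a b : ℕ} (h : T.Run s₁ s₂ (a + 1) b) :
    ∃ t t' b₁ b₂, T.Run s₁ t 0 b₁ ∧ T.M t t' ∧ T.Run t' s₂ a b₂ ∧ b = b₁ + b₂ := by
  generalize hn : a + 1 = n at h
  induction h with
  | refl => omega
  | @m _ _ _ _ b hm hr _ =>
    exact ⟨_, _, 0, b, Run.refl _, hm, hr.of_eq (by omega) rfl, by omega⟩
  | e he _ ih =>
    obtain ⟨t, t', b₁, b₂, hfree, hm, hrest, rfl⟩ := ih hn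
    exact ⟨t, t', b₁ + 1, b₂, Run.e he hfree, hm, hrest, by omega⟩
  | c hc _ ih =>
    obtain ⟨t, t', b₁, b₂, hfree, hm, hrest, rfl⟩ := ih hn
    exact ⟨t, t', b₁, b₂, Run.c hc hfree, hm, hrest, rfl⟩

theorem LocallyBounded.exp_le_of_run_after {s₀ s₁ s₂ : S} {a b a' b' : ℕ}
    (hlb : T.LocallyBounded) (h₀ : T.Init s₀) (hpre : T.Run s₀ s₁ a b)
    (hrun : T.Run s₁ s₂ a' b') : b' ≤ (a + a') * (a' + 1) := by
  induction a' generalizing s₁ a b b' with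
  | zero => simpa using hlb s₀ s₁ s₂ a b b' h₀ hpre hrun
  | succ a' ih =>
    obtain ⟨t, t', b₁, b₂, hfree, hm, hrest, rfl⟩ := hrun.exists_split_first_m
    have hb₁ : b₁ ≤ a := hlb s₀ s₁ t a b b₁ h₀ hpre hfree
    have hpre' : T.Run s₀ t' (a + 1) (b + b₁) :=
      ((hpre.append hfree).append (Run.m hm (Run.refl t'))).of_eq rfl (by omega)
    have hb₂ : b₂ ≤ (a + 1 + a') * (a' + 1) := ih hpre' hrest
    nlinarith

end LabeledTS

/-- Local boundedness implies that the number of exponential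
    transitions of any execution from an initial state is quadratic in the
    number of its multiplicative transitions: `|ρ|_e = O(|ρ|_m²)`. -/
theorem locally_bounded_implies_quadratic {S : Type*} (T : LabeledTS S)
    (hlb : T.LocallyBounded) :
    ∃ k : ℕ, ∀ (s₀ s : S) (a b : ℕ), T.Init s₀ → T.Run s₀ s a b →
      b ≤ k * (a ^ 2 + 1) := by
  refine ⟨2, fun s₀ s a b h₀ hrun => ?_⟩
  have hb : b ≤ (0 + a) * (a + 1) := hlb.exp_le_of_run_after h₀ (LabeledTS.Run.refl s₀) hrun
  nlinarith
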